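/- There exists a function ρ₁ : (0, 1/2) → ℝ with ρ₁(δ)/δ → 0 as δ → 0⁺ such that for every δ ∈ (0, 1/2), every integer j ≥ 0 and every integer N with N − j − 3 > 0, ∫_{|ξ| > δ/(4π)} |g_δ(ξ)|^{N−j−1} dξ ≤ (1 − δ(1 − (4/5)^{1/4}) + ρ₁(δ))^{N−j−1}/π + 2/(π(N − j − 3)). -/

import Mathlib

open MeasureTheory Real Set Filter

noncomputable section

/-- The centered Gaussian density `M_a(v) = e^{-v²/(2a)}/√(2πa)` with variance `a`. -/
def gaussM (a v : ℝ) : ℝ := Real.exp (-v ^ 2 / (2 * a)) / Real.sqrt (2 * π * a)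

/-- `f_δ = δ M_{1/(2δ)} + (1-δ) M_{1/(2(1-δ))}`. -/
def fdel (δ v : ℝ) : ℝ :=
  δ * gaussM (1 / (2 * δ)) v + (1 - δ) * gaussM (1 / (2 * (1 - δ))) v

/-- `h_δ(u) = f_δ(√u)/√u` (for `u > 0`). -/
def hdel (δ u : ℝ) : ℝ := fdel δ (Real.sqrt u) / Real.sqrt u

/-- `g_δ(ξ) = ∫_0^∞ h_δ(u) e^{-2πiξu} du`, the Fourier transform of `h_δ`. -/
def gdel (δ ξ : ℝ) : ℂ :=
  ∫ u in Ioi (0 : ℝ),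
    (hdel δ u : ℂ) * Complex.exp (-(2 : ℂ) * (π : ℂ) * Complex.I * (ξ : ℂ) * (u : ℂ))

/-!
Splitting `f_δ` into its two Gaussians, the substitution `u = v²` turns each half of `g_δ` into a
complex Gaussian integral: `g_δ(ξ) = ∑_{c ∈ {δ, 1-δ}} c √(c/π) (π/(c + 2πiξ))^{1/2}`, so
`|g_δ(ξ)| ≤ ∑ c (c/|c + 2πiξ|)^{1/2}`. For `|ξ| > δ/(4π)` the `δ`-term is at most `(4/5)^{1/4}` and
the other at most `1`, whence `|g_δ(ξ)| ≤ 1 - δ(1 - (4/5)^{1/4})`; and `|g_δ(ξ)| ≤ (2π|ξ|)^{-1/2}`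
for all `ξ ≠ 0`. The first bound is used on `|ξ| ≤ 1/(2π)`, a set of length `1/π`, the second
beyond it, where `∫ (2π|ξ|)^{-k/2} = 2/(π(k-2))`. So `ρ₁ = 0` works.
-/

section Complex

open Complex

lemma smul_cexp_neg_mul_div_sqrt_sq {b : ℂ} {v : ℝ} (hv : 0 < v) :
    (|(2:ℝ)| * v ^ ((2:ℝ) - 1)) • (cexp (-b * ((v ^ (2:ℝ) : ℝ) : ℂ)) / ((√(v ^ (2:ℝ)) : ℝ) : ℂ))
      = 2 * cexp (-b * (v : ℂ) ^ 2) := by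
  have : (v : ℂ) ≠ 0 := ofReal_ne_zero.mpr hv.ne'
  rw [Real.rpow_two, Real.sqrt_sq hv.le]
  norm_num
  field_simp

lemma integrableOn_Ioi_cexp_neg_mul_div_sqrt {b : ℂ} (hb : 0 < b.re) :
    IntegrableOn (fun u : ℝ => cexp (-b * u) / (√u : ℂ)) (Ioi 0) := by
  rw [← integrableOn_Ioi_comp_rpow_iff _ two_ne_zero]
  refine ((integrable_cexp_neg_mul_sq hb).const_mul 2).integrableOn.congr_fun
    (fun v hv => (smul_cexp_neg_mul_div_sqrt_sq hv).symm) measurableSet_Ioi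

lemma integral_Ioi_cexp_neg_mul_div_sqrt {b : ℂ} (hb : 0 < b.re) :
    ∫ u in Ioi (0 : ℝ), cexp (-b * u) / (√u : ℂ) = (π / b) ^ (1 / 2 : ℂ) := by
  rw [← integral_comp_rpow_Ioi _ two_ne_zero,
    setIntegral_congr_fun measurableSet_Ioi (fun v hv => smul_cexp_neg_mul_div_sqrt_sq hv),
    integral_const_mul, integral_gaussian_complex_Ioi hb]
  ring

lemma gaussM_sqrt {c u : ℝ} (hc : 0 < c) (hu : 0 ≤ u) :
    gaussM (1 / (2 * c)) (√u) = √(c / π) * Real.exp (-c * u) := by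
  rw [gaussM, Real.sq_sqrt hu, show 2 * π * (1 / (2 * c)) = (c / π)⁻¹ by field_simp,
    Real.sqrt_inv, div_inv_eq_mul, mul_comm]
  congr 2
  field_simp

/-- The Fourier transform of `u ↦ M_{1/(2c)}(√u)/√u` on `(0, ∞)`, see `gdel_eq`. -/
def sqrtGaussFT (c ξ : ℝ) : ℂ := √(c / π) * (π / (c + 2 * π * ξ * I)) ^ (1 / 2 : ℂ)

lemma re_ofReal_add_two_pi_mul_I (c ξ : ℝ) : ((c : ℂ) + 2 * π * ξ * I).re = c := by
  simp

lemma hdel_mul_cexp {δ u : ℝ} (hδ₀ : 0 < δ) (hδ₁ : δ < 1) (hu : 0 < u) (ξ : ℝ) :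
    (hdel δ u : ℂ) * cexp (-(2 : ℂ) * π * I * ξ * u)
      = (δ * √(δ / π) : ℝ) * (cexp (-((δ : ℂ) + 2 * π * ξ * I) * u) / (√u : ℂ))
        + ((1 - δ) * √((1 - δ) / π) : ℝ)
          * (cexp (-(((1 - δ : ℝ) : ℂ) + 2 * π * ξ * I) * u) / (√u : ℂ)) := by
  simp only [hdel, fdel, gaussM_sqrt hδ₀ hu.le, gaussM_sqrt (sub_pos.mpr hδ₁) hu.le]
  push_cast
  simp only [neg_add, add_mul, Complex.exp_add]
  ring_nf

lemma gdel_eq {δ : ℝ} (hδ₀ : 0 < δ) (hδ₁ : δ < 1) (ξ : ℝ) :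
    gdel δ ξ = δ * sqrtGaussFT δ ξ + ((1 - δ : ℝ) : ℂ) * sqrtGaussFT (1 - δ) ξ := by
  have hpos : ∀ c : ℝ, 0 < c → 0 < ((c : ℂ) + 2 * π * ξ * I).re := fun c hc => by
    rwa [re_ofReal_add_two_pi_mul_I]
  rw [gdel, setIntegral_congr_fun measurableSet_Ioi (fun u hu => hdel_mul_cexp hδ₀ hδ₁ hu ξ),
    integral_add ((integrableOn_Ioi_cexp_neg_mul_div_sqrt (hpos δ hδ₀)).const_mul _)
      ((integrableOn_Ioi_cexp_neg_mul_div_sqrt (hpos _ (sub_pos.mpr hδ₁))).const_mul _),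
    integral_const_mul, integral_const_mul, integral_Ioi_cexp_neg_mul_div_sqrt (hpos δ hδ₀),
    integral_Ioi_cexp_neg_mul_div_sqrt (hpos _ (sub_pos.mpr hδ₁)), sqrtGaussFT, sqrtGaussFT]
  push_cast
  ring

lemma ofReal_add_two_pi_mul_I_ne_zero {c : ℝ} (hc : 0 < c) (ξ : ℝ) :
    (c : ℂ) + 2 * π * ξ * I ≠ 0 := fun h => by
  simpa [hc.ne'] using congrArg re h

lemma pi_div_mem_slitPlane {c : ℝ} (hc : 0 < c) (ξ : ℝ) :
    (π : ℂ) / (c + 2 * π * ξ * I) ∈ slitPlane := by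
  have hb := normSq_pos.mpr (ofReal_add_two_pi_mul_I_ne_zero hc ξ)
  left
  rw [div_re]
  simp only [ofReal_re, ofReal_im, re_ofReal_add_two_pi_mul_I, zero_mul, zero_div, add_zero]
  positivity

lemma continuous_sqrtGaussFT {c : ℝ} (hc : 0 < c) : Continuous (sqrtGaussFT c) :=
  continuous_const.mul <| (continuous_const.div (by fun_prop)
    (ofReal_add_two_pi_mul_I_ne_zero hc)).cpow continuous_const (pi_div_mem_slitPlane hc)

lemma norm_sqrtGaussFT {c : ℝ} (hc : 0 < c) (ξ : ℝ) :
    ‖sqrtGaussFT c ξ‖ = √(c / √(c ^ 2 + (2 * π * ξ) ^ 2)) := by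
  have hb := norm_pos_iff.mpr (ofReal_add_two_pi_mul_I_ne_zero hc ξ)
  have hb_norm : ‖(c : ℂ) + 2 * π * ξ * I‖ = √(c ^ 2 + (2 * π * ξ) ^ 2) := by
    simpa using norm_add_mul_I c (2 * π * ξ)
  rw [← hb_norm, sqrtGaussFT, norm_mul, norm_real, Real.norm_of_nonneg (Real.sqrt_nonneg _),
    show (1 / 2 : ℂ) = ((1 / 2 : ℝ) : ℂ) by norm_num, norm_cpow_real, norm_div, norm_real,
    Real.norm_of_nonneg pi_pos.le, ← Real.sqrt_eq_rpow, ← Real.sqrt_mul (by positivity)]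
  congr 1
  field_simp

lemma norm_sqrtGaussFT_le_one {c : ℝ} (hc : 0 < c) (ξ : ℝ) : ‖sqrtGaussFT c ξ‖ ≤ 1 := by
  rw [norm_sqrtGaussFT hc, Real.sqrt_le_one, div_le_one (by positivity),
    Real.le_sqrt (by positivity)]
  · nlinarith
  · positivity

lemma norm_sqrtGaussFT_le_of_lt {c ξ : ℝ} (hc : 0 < c) (hξ : c / (4 * π) < |ξ|) :
    ‖sqrtGaussFT c ξ‖ ≤ (4 / 5 : ℝ) ^ (1 / 4 : ℝ) := by
  have hξ' : c < 4 * π * |ξ| := by rwa [div_lt_iff₀ (by positivity), mul_comm] at hξ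
  have hratio : (c / √(c ^ 2 + (2 * π * ξ) ^ 2)) ^ 2 ≤ 4 / 5 := by
    rw [div_pow, Real.sq_sqrt (by positivity), div_le_iff₀ (by positivity),
      mul_pow, mul_pow, ← sq_abs ξ]
    nlinarith [pi_pos]
  rw [norm_sqrtGaussFT hc, Real.sqrt_eq_rpow,
    show (1 / 2 : ℝ) = 2 * (1 / 4) by norm_num, Real.rpow_mul (by positivity)]
  gcongr
  exact_mod_cast hratio

lemma norm_sqrtGaussFT_le_rpow {c ξ : ℝ} (hc : 0 < c) (hc₁ : c ≤ 1) (hξ : ξ ≠ 0) :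
    ‖sqrtGaussFT c ξ‖ ≤ (2 * π * |ξ|) ^ (-(1 / 2) : ℝ) := by
  have hξ' : 0 < 2 * π * |ξ| := by positivity
  have him : 2 * π * |ξ| ≤ √(c ^ 2 + (2 * π * ξ) ^ 2) := by
    rw [Real.le_sqrt hξ'.le (by positivity), mul_pow, mul_pow, sq_abs]
    nlinarith
  rw [norm_sqrtGaussFT hc, Real.rpow_neg hξ'.le, ← Real.inv_rpow hξ'.le, ← Real.sqrt_eq_rpow]
  gcongr
  calc c / √(c ^ 2 + (2 * π * ξ) ^ 2) ≤ 1 / √(c ^ 2 + (2 * π * ξ) ^ 2) := by gcongr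
    _ ≤ (2 * π * |ξ|)⁻¹ := by rw [one_div]; gcongr

end Complex

section gdel

variable {δ : ℝ}

lemma continuous_gdel (hδ₀ : 0 < δ) (hδ₁ : δ < 1) : Continuous (gdel δ) := by
  rw [funext (gdel_eq hδ₀ hδ₁)]
  exact (continuous_const.mul (continuous_sqrtGaussFT hδ₀)).add
    (continuous_const.mul (continuous_sqrtGaussFT (sub_pos.mpr hδ₁)))

lemma norm_gdel_le (hδ₀ : 0 < δ) (hδ₁ : δ < 1) (ξ : ℝ) :
    ‖gdel δ ξ‖ ≤ δ * ‖sqrtGaussFT δ ξ‖ + (1 - δ) * ‖sqrtGaussFT (1 - δ) ξ‖ := by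
  rw [gdel_eq hδ₀ hδ₁]
  refine (norm_add_le _ _).trans_eq ?_
  rw [norm_mul, norm_mul, Complex.norm_real, Complex.norm_real, Real.norm_of_nonneg hδ₀.le,
    Real.norm_of_nonneg (sub_pos.mpr hδ₁).le]

lemma norm_gdel_le_of_lt (hδ₀ : 0 < δ) (hδ₁ : δ < 1) {ξ : ℝ} (hξ : δ / (4 * π) < |ξ|) :
    ‖gdel δ ξ‖ ≤ 1 - δ * (1 - (4 / 5 : ℝ) ^ (1 / 4 : ℝ)) := by
  have h₁ := norm_sqrtGaussFT_le_of_lt hδ₀ hξ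
  have h₂ := norm_sqrtGaussFT_le_one (sub_pos.mpr hδ₁) ξ
  nlinarith [norm_gdel_le hδ₀ hδ₁ ξ]

lemma norm_gdel_le_rpow (hδ₀ : 0 < δ) (hδ₁ : δ < 1) {ξ : ℝ} (hξ : ξ ≠ 0) :
    ‖gdel δ ξ‖ ≤ (2 * π * |ξ|) ^ (-(1 / 2) : ℝ) := by
  have h₁ := norm_sqrtGaussFT_le_rpow hδ₀ hδ₁.le hξ
  have h₂ := norm_sqrtGaussFT_le_rpow (sub_pos.mpr hδ₁) (by linarith) hξ
  nlinarith [norm_gdel_le hδ₀ hδ₁ ξ]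

lemma pow_norm_gdel_le_rpow {ξ : ℝ} (hδ₀ : 0 < δ) (hδ₁ : δ < 1) (hξ : ξ ≠ 0) (k : ℕ) :
    ‖gdel δ ξ‖ ^ k ≤ (2 * π * |ξ|) ^ (-(1 / 2) * k : ℝ) := by
  rw [Real.rpow_mul_natCast (by positivity)]
  exact pow_le_pow_left₀ (norm_nonneg _) (norm_gdel_le_rpow hδ₀ hδ₁ hξ) k

end gdel

lemma integral_Ioi_inv_mul_rpow {b s : ℝ} (hb : 0 < b) (hs : s < -1) :
    ∫ x in Ioi b⁻¹, (b * x) ^ s = -(b * (s + 1))⁻¹ := by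
  rw [integral_comp_mul_left_Ioi (· ^ s) _ hb, mul_inv_cancel₀ hb.ne',
    integral_Ioi_rpow_of_lt hs one_pos, Real.one_rpow, smul_eq_mul, mul_inv]
  ring

lemma integral_compl_Icc_mul_abs_rpow {b s : ℝ} (hb : 0 < b) (hs : s < -1) :
    ∫ x in (Icc (-b⁻¹) b⁻¹)ᶜ, (b * |x|) ^ s = -2 * (b * (s + 1))⁻¹ := by
  have hind : (Icc (-b⁻¹) b⁻¹)ᶜ.indicator (fun x => (b * |x|) ^ s)
      = fun x => (Ioi b⁻¹).indicator (fun y => (b * y) ^ s) |x| := by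
    ext x
    simp only [indicator, mem_compl_iff, mem_Icc, mem_Ioi, ← abs_le, not_le]
  rw [← integral_indicator measurableSet_Icc.compl, hind, integral_comp_abs,
    setIntegral_indicator measurableSet_Ioi, Ioi_inter_Ioi, sup_of_le_right (by positivity),
    integral_Ioi_inv_mul_rpow hb hs]
  ring

lemma integrable_indicator_Icc_const (x y c : ℝ) : Integrable ((Icc x y).indicator fun _ => c) :=
  (integrable_indicator_iff measurableSet_Icc).mpr (integrableOn_const measure_Icc_lt_top.ne)

lemma integrable_indicator_compl_Icc_mul_abs_rpow {b s : ℝ} (hb : 0 < b) (hs : s < -1) :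
    Integrable ((Icc (-b⁻¹) b⁻¹)ᶜ.indicator fun x => (b * |x|) ^ s) := by
  refine (integrable_indicator_iff measurableSet_Icc.compl).mpr (.of_integral_ne_zero ?_)
  rw [integral_compl_Icc_mul_abs_rpow hb hs]
  have : s + 1 ≠ 0 := by linarith
  simp [hb.ne', this]

def gdelMajorant (a : ℝ) (k : ℕ) : ℝ → ℝ :=
  (Icc (-(2 * π)⁻¹) (2 * π)⁻¹).indicator (fun _ => a ^ k)
    + (Icc (-(2 * π)⁻¹) (2 * π)⁻¹)ᶜ.indicator (fun ξ => (2 * π * |ξ|) ^ (-(1 / 2) * k : ℝ))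

section gdelMajorant

variable {a : ℝ} {k : ℕ}

lemma gdelMajorant_nonneg (ha : 0 ≤ a) : 0 ≤ gdelMajorant a k := fun ξ =>
  add_nonneg (indicator_nonneg (fun _ _ => pow_nonneg ha k) ξ)
    (indicator_nonneg (fun _ _ => Real.rpow_nonneg (by positivity) _) ξ)

lemma integrable_gdelMajorant (hk : 3 ≤ k) : Integrable (gdelMajorant a k) := by
  have hk' : (3 : ℝ) ≤ k := by exact_mod_cast hk
  exact (integrable_indicator_Icc_const _ _ _).add
    (integrable_indicator_compl_Icc_mul_abs_rpow (by positivity) (by linarith))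

lemma integral_gdelMajorant (hk : 3 ≤ k) :
    ∫ ξ, gdelMajorant a k ξ = a ^ k / π + 2 / (π * ((k : ℝ) - 2)) := by
  have hk' : (3 : ℝ) ≤ k := by exact_mod_cast hk
  have : (k : ℝ) - 2 ≠ 0 := by linarith
  have := pi_ne_zero
  rw [gdelMajorant, integral_add' (integrable_indicator_Icc_const _ _ _)
      (integrable_indicator_compl_Icc_mul_abs_rpow (by positivity) (by linarith)),
    integral_indicator_const _ measurableSet_Icc, integral_indicator measurableSet_Icc.compl,
    integral_compl_Icc_mul_abs_rpow (by positivity) (by linarith),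
    Real.volume_real_Icc_of_le (neg_le_self (by positivity)), smul_eq_mul,
    show -(1 / 2) * (k : ℝ) + 1 = -(((k : ℝ) - 2) / 2) by ring]
  field_simp
  ring

end gdelMajorant

lemma pow_norm_gdel_le_gdelMajorant {δ ξ : ℝ} (hδ₀ : 0 < δ) (hδ₁ : δ < 1)
    (hξ : δ / (4 * π) < |ξ|) (k : ℕ) :
    ‖gdel δ ξ‖ ^ k ≤ gdelMajorant (1 - δ * (1 - (4 / 5 : ℝ) ^ (1 / 4 : ℝ))) k ξ := by
  by_cases hξA : ξ ∈ Icc (-(2 * π)⁻¹) (2 * π)⁻¹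
  · simp only [gdelMajorant, Pi.add_apply, indicator_of_mem hξA,
      indicator_of_notMem (notMem_compl_iff.mpr hξA), add_zero]
    exact pow_le_pow_left₀ (norm_nonneg _) (norm_gdel_le_of_lt hδ₀ hδ₁ hξ) k
  · have hξ0 : ξ ≠ 0 := by rintro rfl; exact hξA ⟨by simp [pi_pos.le], by simp [pi_pos.le]⟩
    simp only [gdelMajorant, Pi.add_apply, indicator_of_notMem hξA,
      indicator_of_mem (mem_compl hξA), zero_add]
    exact pow_norm_gdel_le_rpow hδ₀ hδ₁ hξ0 k

lemma setIntegral_pow_norm_gdel_le {δ : ℝ} (hδ₀ : 0 < δ) (hδ₁ : δ < 1) {k : ℕ} (hk : 3 ≤ k) :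
    ∫ ξ in {ξ : ℝ | δ / (4 * π) < |ξ|}, ‖gdel δ ξ‖ ^ k
      ≤ (1 - δ * (1 - (4 / 5 : ℝ) ^ (1 / 4 : ℝ))) ^ k / π + 2 / (π * ((k : ℝ) - 2)) := by
  set S := {ξ : ℝ | δ / (4 * π) < |ξ|}
  set G := gdelMajorant (1 - δ * (1 - (4 / 5 : ℝ) ^ (1 / 4 : ℝ))) k
  have hG_nonneg : 0 ≤ G := gdelMajorant_nonneg <| by
    nlinarith [Real.rpow_nonneg (by norm_num : (0 : ℝ) ≤ 4 / 5) (1 / 4)]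
  have hS : MeasurableSet S := measurableSet_lt measurable_const continuous_abs.measurable
  have hf_int : IntegrableOn (fun ξ => ‖gdel δ ξ‖ ^ k) S :=
    (integrable_gdelMajorant hk).integrableOn.mono'
      ((continuous_gdel hδ₀ hδ₁).norm.pow k).aestronglyMeasurable
      ((ae_restrict_iff' hS).mpr (ae_of_all _ fun ξ hξ => by
        rw [norm_pow, norm_norm]; exact pow_norm_gdel_le_gdelMajorant hδ₀ hδ₁ hξ k))
  calc ∫ ξ in S, ‖gdel δ ξ‖ ^ k
      ≤ ∫ ξ in S, G ξ := setIntegral_mono_on hf_int (integrable_gdelMajorant hk).integrableOn hS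
        fun ξ hξ => pow_norm_gdel_le_gdelMajorant hδ₀ hδ₁ hξ k
    _ ≤ ∫ ξ, G ξ := setIntegral_le_integral (integrable_gdelMajorant hk) (ae_of_all _ hG_nonneg)
    _ = _ := integral_gdelMajorant hk

/-- Integral bound for powers of `g_δ` outside the radius `δ/(4π)`. -/
theorem gdel_pow_integral_bound :
    ∃ ρ₁ : ℝ → ℝ,
      Tendsto (fun δ => ρ₁ δ / δ) (nhdsWithin 0 (Ioi 0)) (nhds 0) ∧
      ∀ δ ∈ Ioo (0 : ℝ) (1 / 2), ∀ j N : ℕ, j + 3 < N →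
        ∫ ξ in {ξ : ℝ | δ / (4 * π) < |ξ|}, ‖gdel δ ξ‖ ^ (N - j - 1)
          ≤ (1 - δ * (1 - (4 / 5 : ℝ) ^ ((1 : ℝ) / 4)) + ρ₁ δ) ^ (N - j - 1) / π
            + 2 / (π * ((N : ℝ) - (j : ℝ) - 3)) := by
  refine ⟨0, by simp, ?_⟩
  rintro δ ⟨hδ₀, hδ⟩ j N hjN
  have hN : ((N - j - 1 : ℕ) : ℝ) - 2 = (N : ℝ) - j - 3 := by
    rw [Nat.cast_sub (by omega), Nat.cast_sub (by omega)]
    ring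
  simpa only [Pi.zero_apply, add_zero, hN] using
    setIntegral_pow_norm_gdel_le hδ₀ (by linarith) (k := N - j - 1) (by omega)

end
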